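/- arXiv:1211.3950 — 5 statements merged into one kernel-verified Lean document; each statement's English description precedes it below -/
import Mathlib

section
/- Let h* ∈ Λ₀ be a feasible flow such that for every O-D pair w ∈ W and every path p ∈ P_w, c_p(t) = v_w holds for almost every t ∈ [t₀,t_f] with h*_p(t) > 0 (flow departs only at times of minimal effective delay). Then h* solves the variational inequality: for every h ∈ Λ₀, ∑_{p∈P} ∫_{t₀}^{t_f} c_p(t)·(h_p(t) − h*_p(t)) dt ≥ 0. -/
/-!
Since `v_w` is the essential infimum of the delays on `P_w`, every `c_p` is a.e. at least
`v_{π p}`, so for any feasible `h` we get `∫ c_p h_p ≥ v_{π p} ∫ h_p`, while for `h*` this is an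
equality because `h*_p` only charges the set where `c_p = v_{π p}`. Summing over each
O-D pair, both lower bounds equal `∑_w v_w Q_w`, whence the variational inequality.
-/

open MeasureTheory Filter

namespace MeasureTheory

variable {α : Type*} [MeasurableSpace α] {μ : Measure α}

theorem ae_essInf_iInf_le {ι : Type*} [Finite ι] {f : ι → α → ℝ}
    (hf : ∀ i, ∃ b, ∀ᵐ t ∂μ, b ≤ f i t) (i : ι) :
    ∀ᵐ t ∂μ, essInf (fun t => ⨅ j, f j t) μ ≤ f i t := by
  have : Nonempty ι := ⟨i⟩
  choose b hb using hf
  have hb_all : ∀ᵐ t ∂μ, ∀ j, b j ≤ f j t := ae_all_iff.2 hb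
  have hbdd : IsBoundedUnder (· ≥ ·) (ae μ) (fun t => ⨅ j, f j t) := by
    refine isBoundedUnder_of_eventually_ge (a := ⨅ j, b j) ?_
    filter_upwards [hb_all] with t ht
    exact ciInf_mono (Set.finite_range _).bddBelow ht
  filter_upwards [ae_essInf_le hbdd] with t ht
  exact ht.trans (ciInf_le (Set.finite_range _).bddBelow i)

theorem mul_integral_le_integral_mul {c h : α → ℝ} {v : ℝ} (hc : ∀ᵐ t ∂μ, v ≤ c t)
    (hh : ∀ᵐ t ∂μ, 0 ≤ h t) (hh_int : Integrable h μ) (hch_int : Integrable (fun t => c t * h t) μ) :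
    v * ∫ t, h t ∂μ ≤ ∫ t, c t * h t ∂μ := by
  rw [← integral_const_mul]
  refine integral_mono_ae (hh_int.const_mul v) hch_int ?_
  filter_upwards [hc, hh] with t hct hht
  exact mul_le_mul_of_nonneg_right hct hht

theorem integral_mul_eq_mul_integral {c h : α → ℝ} {v : ℝ}
    (hc : ∀ᵐ t ∂μ, 0 < h t → c t = v) (hh : ∀ᵐ t ∂μ, 0 ≤ h t) :
    ∫ t, c t * h t ∂μ = v * ∫ t, h t ∂μ := by
  rw [← integral_const_mul]
  refine integral_congr_ae ?_
  filter_upwards [hc, hh] with t hct hht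
  rcases hht.lt_or_eq with hpos | hzero
  · simp only [hct hpos]
  · simp only [← hzero, mul_zero]

theorem sum_integral_mul_sub_nonneg {P W : Type*} [Fintype P] [Fintype W] [DecidableEq W]
    {π : P → W} {c h hs : P → α → ℝ} {v : W → ℝ}
    (hv : ∀ p, ∀ᵐ t ∂μ, v (π p) ≤ c p t)
    (hmin : ∀ p, ∀ᵐ t ∂μ, 0 < hs p t → c p t = v (π p))
    (hh : ∀ p, ∀ᵐ t ∂μ, 0 ≤ h p t) (hhs : ∀ p, ∀ᵐ t ∂μ, 0 ≤ hs p t)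
    (hh_int : ∀ p, Integrable (h p) μ)
    (hch_int : ∀ p, Integrable (fun t => c p t * h p t) μ)
    (hchs_int : ∀ p, Integrable (fun t => c p t * hs p t) μ)
    (hdemand : ∀ w, ∑ p ∈ Finset.univ.filter (fun p => π p = w), ∫ t, h p t ∂μ =
      ∑ p ∈ Finset.univ.filter (fun p => π p = w), ∫ t, hs p t ∂μ) :
    0 ≤ ∑ p, ∫ t, c p t * (h p t - hs p t) ∂μ := by
  have hsplit : ∀ p, ∫ t, c p t * (h p t - hs p t) ∂μ =
      ∫ t, c p t * h p t ∂μ - ∫ t, c p t * hs p t ∂μ := fun p => by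
    simp only [mul_sub, integral_sub (hch_int p) (hchs_int p)]
  have hbalance : ∑ p, v (π p) * (∫ t, h p t ∂μ - ∫ t, hs p t ∂μ) = 0 := by
    rw [← Finset.sum_fiberwise _ π]
    refine Finset.sum_eq_zero fun w _ => ?_
    rw [Finset.sum_congr rfl fun p hp => by rw [(Finset.mem_filter.1 hp).2], ← Finset.mul_sum,
      Finset.sum_sub_distrib, hdemand w, sub_self, mul_zero]
  calc (0 : ℝ) = ∑ p, v (π p) * (∫ t, h p t ∂μ - ∫ t, hs p t ∂μ) := hbalance.symm
    _ ≤ ∑ p, ∫ t, c p t * (h p t - hs p t) ∂μ := by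
      refine Finset.sum_le_sum fun p _ => ?_
      rw [hsplit, mul_sub, integral_mul_eq_mul_integral (hmin p) (hhs p)]
      exact sub_le_sub_right
        (mul_integral_le_integral_mul (hv p) (hh p) (hh_int p) (hch_int p)) _

end MeasureTheory

theorem due_implies_variational_inequality_general
    (t₀ tf : ℝ) (htt : t₀ < tf)
    (W : Type) [Fintype W]
    (P : Type) [Fintype P]
    (π : P → W) [DecidableEq W]
    (c : P → ℝ → ℝ)
    (hc_meas : ∀ p, Measurable (c p))
    (hc_bdd : ∀ p, ∃ M : ℝ, ∀ t ∈ Set.Icc t₀ tf, |c p t| ≤ M)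
    (Q : W → ℝ)
    (v : W → ℝ)
    (hv : ∀ w, v w =
      essInf (fun t => ⨅ p : {p : P // π p = w}, c p.1 t)
        (volume.restrict (Set.Icc t₀ tf)))
    (Λ₀ : (P → ℝ → ℝ) → Prop)
    (hΛ₀ : ∀ h : P → ℝ → ℝ, Λ₀ h ↔
      ((∀ p, MemLp (h p) 2 (volume.restrict (Set.Icc t₀ tf))) ∧
       (∀ p, ∀ᵐ t ∂(volume.restrict (Set.Icc t₀ tf)), 0 ≤ h p t) ∧
       (∀ w, ∑ p ∈ Finset.univ.filter (fun p => π p = w),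
          ∫ t in t₀..tf, h p t = Q w)))
    (hstar : P → ℝ → ℝ) (hstar_feas : Λ₀ hstar)
    (hmin : ∀ w : W, ∀ p : P, π p = w →
      ∀ᵐ t ∂(volume.restrict (Set.Icc t₀ tf)),
        0 < hstar p t → c p t = v w) :
    ∀ h : P → ℝ → ℝ, Λ₀ h →
      0 ≤ ∑ p : P, ∫ t in t₀..tf, c p t * (h p t - hstar p t) := by
  intro h hfeas
  set μ := volume.restrict (Set.Icc t₀ tf)
  have : IsFiniteMeasure μ := isFiniteMeasure_restrict.2 measure_Icc_lt_top.ne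
  have hμ (f : ℝ → ℝ) : ∫ t in t₀..tf, f t = ∫ t, f t ∂μ := by
    rw [intervalIntegral.integral_of_le htt.le, integral_Icc_eq_integral_Ioc]
  obtain ⟨h_mem, h_nn, h_sum⟩ := (hΛ₀ h).1 hfeas
  obtain ⟨hs_mem, hs_nn, hs_sum⟩ := (hΛ₀ hstar).1 hstar_feas
  choose M hM using hc_bdd
  have hc_ae_bdd (p : P) : ∀ᵐ t ∂μ, |c p t| ≤ M p := by
    filter_upwards [ae_restrict_mem measurableSet_Icc] with t ht using hM p t ht
  have hcg_int {g : P → ℝ → ℝ} (hg : ∀ p, MemLp (g p) 2 μ) (p : P) :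
      Integrable (fun t => c p t * g p t) μ :=
    ((hg p).integrable one_le_two).bdd_mul (hc_meas p).aestronglyMeasurable (hc_ae_bdd p)
  have hv_le (p : P) : ∀ᵐ t ∂μ, v (π p) ≤ c p t := by
    rw [hv]
    refine ae_essInf_iInf_le (fun q : {q : P // π q = π p} => ⟨-M q.1, ?_⟩) ⟨p, rfl⟩
    filter_upwards [hc_ae_bdd q.1] with t ht using (abs_le.1 ht).1
  simp only [hμ] at h_sum hs_sum ⊢
  exact sum_integral_mul_sub_nonneg hv_le (fun p => hmin (π p) p rfl) h_nn hs_nn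
    (fun p => (h_mem p).integrable one_le_two) (hcg_int h_mem) (hcg_int hs_mem)
    (fun w => (h_sum w).trans (hs_sum w).symm)

/-- If a feasible flow `hstar ∈ Λ₀` departs (a.e.) only at times of minimal
effective delay (`c_p t = v_w` whenever `hstar_p t > 0`), then it solves the variational
inequality `∑_p ∫ c_p (h_p - hstar_p) ≥ 0` for all feasible `h`. -/
theorem due_implies_variational_inequality
    (t₀ tf : ℝ) (htt : t₀ < tf)
    (W : Type) [Fintype W] [Nonempty W]
    (P : Type) [Fintype P]
    (π : P → W) [DecidableEq W] (hπ : ∀ w : W, ∃ p : P, π p = w)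
    (c : P → ℝ → ℝ)
    (hc_meas : ∀ p, Measurable (c p))
    (hc_bdd : ∀ p, ∃ M : ℝ, ∀ t ∈ Set.Icc t₀ tf, |c p t| ≤ M)
    (Q : W → ℝ) (hQ : ∀ w, 0 < Q w)
    (v : W → ℝ)
    (hv : ∀ w, v w =
      essInf (fun t => ⨅ p : {p : P // π p = w}, c p.1 t)
        (volume.restrict (Set.Icc t₀ tf)))
    (Λ₀ : (P → ℝ → ℝ) → Prop)
    (hΛ₀ : ∀ h : P → ℝ → ℝ, Λ₀ h ↔
      ((∀ p, MemLp (h p) 2 (volume.restrict (Set.Icc t₀ tf))) ∧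
       (∀ p, ∀ᵐ t ∂(volume.restrict (Set.Icc t₀ tf)), 0 ≤ h p t) ∧
       (∀ w, ∑ p ∈ Finset.univ.filter (fun p => π p = w),
          ∫ t in t₀..tf, h p t = Q w)))
    (hstar : P → ℝ → ℝ) (hstar_feas : Λ₀ hstar)
    (hmin : ∀ w : W, ∀ p : P, π p = w →
      ∀ᵐ t ∂(volume.restrict (Set.Icc t₀ tf)),
        0 < hstar p t → c p t = v w) :
    ∀ h : P → ℝ → ℝ, Λ₀ h →
      0 ≤ ∑ p : P, ∫ t in t₀..tf, c p t * (h p t - hstar p t) :=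
  due_implies_variational_inequality_general t₀ tf htt W P π c hc_meas hc_bdd Q v hv Λ₀ hΛ₀ hstar
    hstar_feas hmin
end

section
/- The infimum of the total effective delay over all feasible flows equals the demand-weighted sum of the minimal effective delays: inf_{h∈Λ₀} ∑_{p∈P} ∫_{t₀}^{t_f} c_p(t)·h_p(t) dt = ∑_{w∈W} v_w · Q_w. -/
/-!
For `p ∈ P_w` we have `c_p ≥ v_w` almost everywhere, so every feasible flow costs at least
`∑ v_w Q_w`. Conversely, for `ε > 0` the set where `min_{p ∈ P_w} c_p < v_w + ε` has positive
measure, hence so does the set `T` where `c_p < v_w + ε` for a single path `p ∈ P_w`; spreading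
`Q_w` uniformly over `T` on that path gives a feasible flow costing at most `∑ (v_w + ε) Q_w`.
-/

open MeasureTheory Filter Finset Topology

section EssInf

variable {α : Type*} [MeasurableSpace α] {μ : Measure α}

lemma measure_setOf_lt_ne_zero_of_essInf_lt [NeZero μ] {f : α → ℝ} {M b : ℝ}
    (hfM : ∀ᵐ t ∂μ, f t ≤ M) (hb : essInf f μ < b) : μ {t | f t < b} ≠ 0 := by
  intro hnull
  have hbf : ∀ᵐ t ∂μ, b ≤ f t := by simpa only [ae_iff, not_le] using hnull
  exact hb.not_ge (le_essInf_of_ae_le b hbf (isCoboundedUnder_ge_of_eventually_le _ hfM))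

lemma exists_measure_setOf_lt_ne_zero_of_iInf {ι : Type*} [Finite ι] [Nonempty ι]
    {f : ι → α → ℝ} {b : ℝ} (h : μ {t | ⨅ i, f i t < b} ≠ 0) :
    ∃ i, μ {t | f i t < b} ≠ 0 := by
  by_contra! hnull
  refine h (measure_mono_null (fun t ht => ?_) (measure_iUnion_null hnull))
  exact Set.mem_iUnion.2 (exists_lt_of_ciInf_lt (f := fun i => f i t) ht)

end EssInf

lemma abs_ciInf_le_of_finite {ι : Type*} [Finite ι] [Nonempty ι] {f : ι → ℝ} {M : ℝ}
    (hf : ∀ i, |f i| ≤ M) : |⨅ i, f i| ≤ M := by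
  obtain ⟨i, hi⟩ := exists_eq_ciInf_of_finite (f := f)
  exact hi ▸ hf i

section Integral

variable {α : Type*} [MeasurableSpace α] {μ : Measure α}

lemma mul_integral_le_integral_mul {a : ℝ} {g h : α → ℝ} (hh : Integrable h μ)
    (hgh : Integrable (fun t => g t * h t) μ) (hag : ∀ᵐ t ∂μ, a ≤ g t)
    (h0 : ∀ᵐ t ∂μ, 0 ≤ h t) : a * ∫ t, h t ∂μ ≤ ∫ t, g t * h t ∂μ := by
  rw [← integral_const_mul]
  refine integral_mono_ae (hh.const_mul a) hgh ?_
  filter_upwards [hag, h0] with t hat h0t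
  exact mul_le_mul_of_nonneg_right hat h0t

lemma integral_mul_indicator_const_le {g : α → ℝ} {T : Set α} (hT : MeasurableSet T)
    (hg : IntegrableOn g T μ) (hTfin : μ T ≠ ⊤) {b k : ℝ} (hk : 0 ≤ k)
    (hgb : ∀ t ∈ T, g t ≤ b) :
    ∫ t, g t * T.indicator (fun _ => k) t ∂μ ≤ b * k * μ.real T := by
  have hind : (fun t => g t * T.indicator (fun _ => k) t) = T.indicator (fun t => k * g t) := by
    ext t
    by_cases ht : t ∈ T <;> simp [ht, mul_comm]
  calc ∫ t, g t * T.indicator (fun _ => k) t ∂μ = k * ∫ t in T, g t ∂μ := by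
        rw [hind, integral_indicator hT, integral_const_mul]
    _ ≤ k * ∫ t in T, b ∂μ :=
        mul_le_mul_of_nonneg_left
          (setIntegral_mono_on hg (integrableOn_const hTfin) hT hgb) hk
    _ = b * k * μ.real T := by
        rw [setIntegral_const, smul_eq_mul]
        ring

end Integral

namespace PathFlow

section SectionFlow

variable {W P β : Type*} [Zero β] {π : P → W} {s : W → P}

variable (π s) in
open Classical in
noncomputable def sectionFlow (u : W → β) (p : P) : β :=
  if p = s (π p) then u (π p) else 0

lemma sectionFlow_apply_of_eq (u : W → β) {p : P} (hp : p = s (π p)) :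
    sectionFlow π s u p = u (π p) :=
  if_pos hp

lemma sectionFlow_apply_section (hs : ∀ w, π (s w) = w) (u : W → β) (w : W) :
    sectionFlow π s u (s w) = u w := by
  rw [sectionFlow_apply_of_eq u (by rw [hs]), hs]

lemma sectionFlow_apply_of_ne (u : W → β) {p : P} (hp : p ≠ s (π p)) :
    sectionFlow π s u p = 0 :=
  if_neg hp

lemma sum_filter_eq_of_section [DecidableEq W] [Fintype P] {M : Type*} [AddCommMonoid M]
    (hs : ∀ w, π (s w) = w) {g : P → M} (hg : ∀ p, p ≠ s (π p) → g p = 0) (w : W) :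
    ∑ p ∈ univ.filter (fun p => π p = w), g p = g (s w) :=
  Finset.sum_eq_single_of_mem (s w) (Finset.mem_filter.2 ⟨Finset.mem_univ _, hs w⟩)
    fun p hp hne => hg p (by rwa [(Finset.mem_filter.1 hp).2])

end SectionFlow

variable {α : Type*} [MeasurableSpace α] {μ : Measure α} {W P : Type*}
  {π : P → W} {c : P → α → ℝ} {Q : W → ℝ}

variable (μ π Q) in
def IsFeasible [Fintype P] [DecidableEq W] (h : P → α → ℝ) : Prop :=
  (∀ p, MemLp (h p) 2 μ) ∧ (∀ p, ∀ᵐ t ∂μ, 0 ≤ h p t) ∧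
    ∀ w, ∑ p ∈ univ.filter (fun p => π p = w), ∫ t, h p t ∂μ = Q w

variable (μ c) in
noncomputable def totalDelay [Fintype P] (h : P → α → ℝ) : ℝ := ∑ p, ∫ t, c p t * h p t ∂μ

variable (μ π c) in
noncomputable def minDelay (w : W) : ℝ :=
  essInf (fun t => ⨅ p : {p : P // π p = w}, c p.1 t) μ

lemma ae_abs_iInf_fiber_le [Finite P] {M : ℝ} (hcM : ∀ p, ∀ᵐ t ∂μ, |c p t| ≤ M)
    (hπ : Function.Surjective π) (w : W) :
    ∀ᵐ t ∂μ, |⨅ p : {p : P // π p = w}, c p.1 t| ≤ M := by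
  obtain ⟨p, hp⟩ := hπ w
  have : Nonempty {p : P // π p = w} := ⟨⟨p, hp⟩⟩
  filter_upwards [ae_all_iff.2 hcM] with t ht
  exact abs_ciInf_le_of_finite fun p => ht p.1

lemma minDelay_le_ae [Finite P] {M : ℝ} (hcM : ∀ p, ∀ᵐ t ∂μ, |c p t| ≤ M)
    (hπ : Function.Surjective π) (p : P) :
    ∀ᵐ t ∂μ, minDelay μ π c (π p) ≤ c p t := by
  have hbdd := isBoundedUnder_of_eventually_ge
    ((ae_abs_iInf_fiber_le hcM hπ (π p)).mono fun t ht => (abs_le.1 ht).1)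
  filter_upwards [ae_essInf_le hbdd] with t ht
  exact ht.trans (ciInf_le (f := fun q : {q : P // π q = π p} => c q.1 t)
    (Set.finite_range _).bddBelow ⟨p, rfl⟩)

lemma weighted_minDelay_le_totalDelay [Fintype W] [DecidableEq W] [Fintype P]
    [IsFiniteMeasure μ] {M : ℝ}
    (hc : ∀ p, AEStronglyMeasurable (c p) μ) (hcM : ∀ p, ∀ᵐ t ∂μ, |c p t| ≤ M)
    (hπ : Function.Surjective π) {h : P → α → ℝ} (hh : IsFeasible μ π Q h) :
    ∑ w, minDelay μ π c w * Q w ≤ totalDelay μ c h := by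
  obtain ⟨hL2, hnonneg, hdemand⟩ := hh
  have hint : ∀ p, Integrable (h p) μ := fun p => (hL2 p).integrable one_le_two
  calc ∑ w, minDelay μ π c w * Q w
      = ∑ w, ∑ p ∈ univ.filter (fun p => π p = w), minDelay μ π c (π p) * ∫ t, h p t ∂μ := by
        refine Finset.sum_congr rfl fun w _ => ?_
        rw [← hdemand w, Finset.mul_sum]
        exact Finset.sum_congr rfl fun p hp => by rw [(Finset.mem_filter.1 hp).2]
    _ = ∑ p, minDelay μ π c (π p) * ∫ t, h p t ∂μ := Finset.sum_fiberwise _ _ _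
    _ ≤ totalDelay μ c h := Finset.sum_le_sum fun p _ =>
        mul_integral_le_integral_mul (hint p)
          ((hint p).bdd_mul (hc p) (by simpa only [Real.norm_eq_abs] using hcM p))
          (minDelay_le_ae hcM hπ p) (hnonneg p)

lemma exists_measure_lt_minDelay_add_ne_zero [NeZero μ] [Finite P] {M : ℝ}
    (hcM : ∀ p, ∀ᵐ t ∂μ, |c p t| ≤ M) (hπ : Function.Surjective π) (w : W) {ε : ℝ}
    (hε : 0 < ε) : ∃ p, π p = w ∧ μ {t | c p t < minDelay μ π c w + ε} ≠ 0 := by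
  obtain ⟨p, hp⟩ := hπ w
  have : Nonempty {p : P // π p = w} := ⟨⟨p, hp⟩⟩
  have hlt := measure_setOf_lt_ne_zero_of_essInf_lt
    ((ae_abs_iInf_fiber_le hcM hπ w).mono fun t ht => (abs_le.1 ht).2)
    (lt_add_of_pos_right (minDelay μ π c w) hε)
  obtain ⟨q, hq⟩ := exists_measure_setOf_lt_ne_zero_of_iInf hlt
  exact ⟨q.1, q.2, hq⟩

lemma isFeasible_sectionFlow [DecidableEq W] [Fintype P] {s : W → P} (hs : ∀ w, π (s w) = w)
    {u : W → α → ℝ} (hu : ∀ w, MemLp (u w) 2 μ) (hu0 : ∀ w, ∀ᵐ t ∂μ, 0 ≤ u w t)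
    (huQ : ∀ w, ∫ t, u w t ∂μ = Q w) : IsFeasible μ π Q (sectionFlow π s u) := by
  refine ⟨fun p => ?_, fun p => ?_, fun w => ?_⟩
  · by_cases hp : p = s (π p)
    · simpa only [sectionFlow_apply_of_eq u hp] using hu (π p)
    · simpa only [sectionFlow_apply_of_ne u hp] using MemLp.zero
  · by_cases hp : p = s (π p)
    · simpa only [sectionFlow_apply_of_eq u hp] using hu0 (π p)
    · simp [sectionFlow_apply_of_ne u hp]
  · rw [sum_filter_eq_of_section hs (fun p hp => by simp [sectionFlow_apply_of_ne u hp]),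
      sectionFlow_apply_section hs, huQ]

lemma totalDelay_sectionFlow [Fintype W] [DecidableEq W] [Fintype P] {s : W → P}
    (hs : ∀ w, π (s w) = w) (u : W → α → ℝ) :
    totalDelay μ c (sectionFlow π s u) = ∑ w, ∫ t, c (s w) t * u w t ∂μ := by
  rw [totalDelay, ← Finset.sum_fiberwise univ π]
  refine Finset.sum_congr rfl fun w _ => ?_
  rw [sum_filter_eq_of_section hs (fun p hp => by simp [sectionFlow_apply_of_ne u hp]),
    sectionFlow_apply_section hs]

lemma exists_isFeasible_totalDelay_le [Fintype W] [DecidableEq W] [Fintype P]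
    [IsFiniteMeasure μ] [NeZero μ] {M : ℝ} (hc : ∀ p, Measurable (c p))
    (hcM : ∀ p, ∀ᵐ t ∂μ, |c p t| ≤ M) (hπ : Function.Surjective π) (hQ : ∀ w, 0 ≤ Q w)
    {ε : ℝ} (hε : 0 < ε) :
    ∃ h, IsFeasible μ π Q h ∧ totalDelay μ c h ≤ ∑ w, (minDelay μ π c w + ε) * Q w := by
  choose s hs hpos using fun w => exists_measure_lt_minDelay_add_ne_zero hcM hπ w hε
  set T := fun w => {t | c (s w) t < minDelay μ π c w + ε}
  have hT : ∀ w, MeasurableSet (T w) := fun w => measurableSet_lt (hc _) measurable_const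
  have hTreal : ∀ w, μ.real (T w) ≠ 0 := fun w =>
    (ENNReal.toReal_ne_zero).2 ⟨hpos w, measure_ne_top μ _⟩
  set u := fun w => (T w).indicator (fun _ => Q w / μ.real (T w))
  refine ⟨sectionFlow π s u, isFeasible_sectionFlow hs
    (fun w => memLp_indicator_const 2 (hT w) _ (Or.inr (measure_ne_top μ _)))
    (fun w => ae_of_all _ (Set.indicator_nonneg fun _ _ => div_nonneg (hQ w) measureReal_nonneg))
    (fun w => by simp [u, integral_indicator_const _ (hT w), mul_div_cancel₀ _ (hTreal w)]), ?_⟩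
  rw [totalDelay_sectionFlow hs]
  refine Finset.sum_le_sum fun w _ => ?_
  calc ∫ t, c (s w) t * u w t ∂μ
      ≤ (minDelay μ π c w + ε) * (Q w / μ.real (T w)) * μ.real (T w) :=
        integral_mul_indicator_const_le (hT w)
          ((Integrable.of_bound (hc _).aestronglyMeasurable M
            (by simpa only [Real.norm_eq_abs] using hcM (s w))).integrableOn)
          (measure_ne_top μ _) (div_nonneg (hQ w) measureReal_nonneg) fun t ht => ht.le
    _ = (minDelay μ π c w + ε) * Q w := by rw [mul_assoc, div_mul_cancel₀ _ (hTreal w)]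

theorem isGLB_totalDelay [Fintype W] [DecidableEq W] [Fintype P] [IsFiniteMeasure μ]
    [NeZero μ] {M : ℝ} (hc : ∀ p, Measurable (c p)) (hcM : ∀ p, ∀ᵐ t ∂μ, |c p t| ≤ M)
    (hπ : Function.Surjective π) (hQ : ∀ w, 0 ≤ Q w) :
    IsGLB {z | ∃ h, IsFeasible μ π Q h ∧ z = totalDelay μ c h}
      (∑ w, minDelay μ π c w * Q w) := by
  refine ⟨?_, fun b hb => ?_⟩
  · rintro z ⟨h, hh, rfl⟩
    exact weighted_minDelay_le_totalDelay (fun p => (hc p).aestronglyMeasurable) hcM hπ hh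
  · have hlim : Tendsto (fun ε => ∑ w, (minDelay μ π c w + ε) * Q w) (𝓝[>] 0)
        (𝓝 (∑ w, minDelay μ π c w * Q w)) :=
      tendsto_nhdsWithin_of_tendsto_nhds (Continuous.tendsto' (by fun_prop) 0 _ (by simp))
    refine ge_of_tendsto hlim (eventually_nhdsWithin_of_forall fun ε hε => ?_)
    obtain ⟨h, hh, hle⟩ := exists_isFeasible_totalDelay_le hc hcM hπ hQ hε
    exact (hb ⟨h, hh, rfl⟩).trans hle

theorem sInf_totalDelay_eq [Fintype W] [DecidableEq W] [Fintype P] [IsFiniteMeasure μ]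
    [NeZero μ] {M : ℝ} (hc : ∀ p, Measurable (c p)) (hcM : ∀ p, ∀ᵐ t ∂μ, |c p t| ≤ M)
    (hπ : Function.Surjective π) (hQ : ∀ w, 0 ≤ Q w) :
    sInf {z | ∃ h, IsFeasible μ π Q h ∧ z = totalDelay μ c h} =
      ∑ w, minDelay μ π c w * Q w :=
  (isGLB_totalDelay hc hcM hπ hQ).csInf_eq <|
    let ⟨h, hh, _⟩ := exists_isFeasible_totalDelay_le hc hcM hπ hQ one_pos
    ⟨_, h, hh, rfl⟩

end PathFlow

open PathFlow in
theorem inf_total_delay_eq_weighted_min_delay_general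
    (t₀ tf : ℝ) (htt : t₀ < tf)
    (W : Type) [Fintype W] [DecidableEq W]
    (P : Type) [Fintype P]
    (π : P → W) (hπ : ∀ w : W, ∃ p : P, π p = w)
    (c : P → ℝ → ℝ)
    (hc_meas : ∀ p, Measurable (c p))
    (hc_bdd : ∀ p, ∃ M : ℝ, ∀ t ∈ Set.Icc t₀ tf, |c p t| ≤ M)
    (Q : W → ℝ) (hQ : ∀ w, 0 < Q w)
    (v : W → ℝ)
    (hv : ∀ w, v w =
      essInf (fun t => ⨅ p : {p : P // π p = w}, c p.1 t)
        (volume.restrict (Set.Icc t₀ tf)))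
    (Λ₀ : (P → ℝ → ℝ) → Prop)
    (hΛ₀ : ∀ h : P → ℝ → ℝ, Λ₀ h ↔
      ((∀ p, MemLp (h p) 2 (volume.restrict (Set.Icc t₀ tf))) ∧
       (∀ p, ∀ᵐ t ∂(volume.restrict (Set.Icc t₀ tf)), 0 ≤ h p t) ∧
       (∀ w, ∑ p ∈ Finset.univ.filter (fun p => π p = w),
          ∫ t in t₀..tf, h p t = Q w))) :
    sInf {z : ℝ | ∃ h : P → ℝ → ℝ, Λ₀ h ∧
        z = ∑ p : P, ∫ t in t₀..tf, c p t * h p t}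
      = ∑ w : W, v w * Q w := by
  set μ := volume.restrict (Set.Icc t₀ tf)
  have : NeZero μ := ⟨by simpa [μ, Measure.restrict_eq_zero] using htt⟩
  have hint (g : ℝ → ℝ) : ∫ t in t₀..tf, g t = ∫ t, g t ∂μ := by
    rw [intervalIntegral.integral_of_le htt.le, integral_Icc_eq_integral_Ioc]
  choose M hM using hc_bdd
  obtain ⟨B, hB⟩ := (Set.finite_range M).bddAbove
  have hcB (p : P) : ∀ᵐ t ∂μ, |c p t| ≤ B :=
    ae_restrict_of_forall_mem measurableSet_Icc fun t ht => (hM p t ht).trans (hB ⟨p, rfl⟩)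
  have hS : {z : ℝ | ∃ h : P → ℝ → ℝ, Λ₀ h ∧ z = ∑ p : P, ∫ t in t₀..tf, c p t * h p t} =
      {z | ∃ h, IsFeasible μ π Q h ∧ z = totalDelay μ c h} := by
    simp only [hΛ₀, hint]
    rfl
  rw [hS, sInf_totalDelay_eq hc_meas hcB hπ fun w => (hQ w).le]
  simp only [minDelay, hv]

/-- The infimum of the total effective delay over all feasible flows equals
the demand-weighted sum of the minimal effective delays:
`inf_{h ∈ Λ₀} ∑_p ∫ c_p h_p = ∑_w v_w Q_w`. -/
theorem inf_total_delay_eq_weighted_min_delay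
    (t₀ tf : ℝ) (htt : t₀ < tf)
    (W : Type) [Fintype W] [Nonempty W] [DecidableEq W]
    (P : Type) [Fintype P]
    (π : P → W) (hπ : ∀ w : W, ∃ p : P, π p = w)
    (c : P → ℝ → ℝ)
    (hc_meas : ∀ p, Measurable (c p))
    (hc_bdd : ∀ p, ∃ M : ℝ, ∀ t ∈ Set.Icc t₀ tf, |c p t| ≤ M)
    (Q : W → ℝ) (hQ : ∀ w, 0 < Q w)
    (v : W → ℝ)
    (hv : ∀ w, v w =
      essInf (fun t => ⨅ p : {p : P // π p = w}, c p.1 t)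
        (volume.restrict (Set.Icc t₀ tf)))
    (Λ₀ : (P → ℝ → ℝ) → Prop)
    (hΛ₀ : ∀ h : P → ℝ → ℝ, Λ₀ h ↔
      ((∀ p, MemLp (h p) 2 (volume.restrict (Set.Icc t₀ tf))) ∧
       (∀ p, ∀ᵐ t ∂(volume.restrict (Set.Icc t₀ tf)), 0 ≤ h p t) ∧
       (∀ w, ∑ p ∈ Finset.univ.filter (fun p => π p = w),
          ∫ t in t₀..tf, h p t = Q w))) :
    sInf {z : ℝ | ∃ h : P → ℝ → ℝ, Λ₀ h ∧
        z = ∑ p : P, ∫ t in t₀..tf, c p t * h p t}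
      = ∑ w : W, v w * Q w :=
  inf_total_delay_eq_weighted_min_delay_general t₀ tf htt W P π hπ c hc_meas hc_bdd Q hQ v hv Λ₀ hΛ₀
end

section
/- Let τ₁(t) = t + A + B·x(t), t₁ = A, and t₂ = τ₁(t₁), and let τ₁⁻¹ : [t₁,t₂] → [0,t₁] denote the inverse of τ₁ (which exists since τ₁ is strictly increasing with τ₁(0) = t₁). Define the second-interval exit time function τ₂(t) = t + A + B·∫_{τ₁⁻¹(t)}^{t} u(s) ds for t ∈ [t₁, t₂]. Then τ₂(t₁) = τ₁(t₁) = t₂, τ₂ is differentiable on [t₁,t₂] with τ₂′(t) = B·u(t) + 1/(1 + B·u(τ₁⁻¹(t))), and in particular τ₂′(t) > B·u(t) ≥ 0 for all t ∈ [t₁,t₂], so τ₂ is strictly increasing on [t₁,t₂]. -/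
/-!
On `[t₁, t₂]` the inverse `τinv` of `τ₁` is the restriction of the global inverse `g` of the
strictly increasing surjection `τ₁ t = t + A + B·x t`, and `τ₁ (g t) = t` turns
`B·∫_{g t}^{t} u = B·x t - B·x (g t)` into `B·x t - t + A + g t`. Hence
`τ₂ = 2A + B·x + g` there; `x' = u ≥ 0` and `g' = 1/(1 + B·u ∘ g) > 0` by the inverse
function rule, so this function has positive derivative everywhere.
-/

open Filter Set

theorem surjective_add_of_monotone {h : ℝ → ℝ} (hc : Continuous h) (hm : Monotone h) :
    Function.Surjective fun t => t + h t := by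
  refine (continuous_id.add hc).surjective ?_ ?_
  · refine tendsto_atTop_mono' _ ?_ (tendsto_atTop_add_const_right _ (h 0) tendsto_id)
    filter_upwards [eventually_ge_atTop 0] with t ht using by simpa using hm ht
  · refine tendsto_atBot_mono' _ ?_ (tendsto_atBot_add_const_right _ (h 0) tendsto_id)
    filter_upwards [eventually_le_atBot 0] with t ht using by simpa using hm ht

theorem exists_rightInverse_hasDerivAt {f f' : ℝ → ℝ} (hf : ∀ t, HasDerivAt f (f' t) t)
    (hf' : ∀ t, 0 < f' t) (hsurj : Function.Surjective f) :
    ∃ g : ℝ → ℝ, (∀ y, f (g y) = y) ∧ ∀ y, HasDerivAt g (f' (g y))⁻¹ y := by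
  let e := (strictMono_of_hasDerivAt_pos hf hf').orderIsoOfSurjective f hsurj
  refine ⟨e.symm, e.apply_symm_apply, fun y => ?_⟩
  exact (hf _).of_local_left_inverse e.symm.continuous.continuousAt (hf' _).ne'
    (.of_forall e.apply_symm_apply)

section ExitTime

variable {x x' : ℝ → ℝ} (hx : ∀ t, HasDerivAt x (x' t) t) {A B : ℝ}
include hx

theorem hasDerivAt_add_const_add_mul (t : ℝ) :
    HasDerivAt (fun t => t + A + B * x t) (1 + B * x' t) t :=
  ((hasDerivAt_id t).add_const A).add ((hx t).const_mul B)

theorem exists_rightInverse_hasDerivAt_add_const_add_mul (hx' : ∀ t, 0 ≤ x' t) (hB : 0 ≤ B) :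
    ∃ g : ℝ → ℝ, (∀ y, g y + A + B * x (g y) = y) ∧
      ∀ y, HasDerivAt g (1 + B * x' (g y))⁻¹ y := by
  have hsurj : Function.Surjective fun t => t + (A + B * x t) :=
    surjective_add_of_monotone
      (continuous_const.add (continuous_const.mul
        (continuous_iff_continuousAt.2 fun t => (hx t).continuousAt)))
      (monotone_const.add ((monotone_of_hasDerivAt_nonneg hx hx').const_mul hB))
  simp only [← add_assoc] at hsurj
  exact exists_rightInverse_hasDerivAt (hasDerivAt_add_const_add_mul hx)
    (fun t => by have := mul_nonneg hB (hx' t); linarith) hsurj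

end ExitTime

theorem add_add_mul_intervalIntegral_eq {u : ℝ → ℝ} {A B s t : ℝ}
    (h0s : IntervalIntegrable u MeasureTheory.volume 0 s)
    (h0t : IntervalIntegrable u MeasureTheory.volume 0 t)
    (hs : s + A + B * ∫ r in 0..s, u r = t) :
    t + A + B * ∫ r in s..t, u r = 2 * A + B * (∫ r in 0..t, u r) + s := by
  rw [← intervalIntegral.integral_interval_sub_left h0t h0s]
  linear_combination -hs

theorem second_interval_exit_time_strict_mono_general
    (A B : ℝ) (hA : 0 < A) (hB : 0 < B)
    (upr utr : ℝ → ℝ) (hupr_cont : Continuous upr) (hutr_cont : Continuous utr)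
    (hupr_nonneg : ∀ t, 0 ≤ upr t) (hutr_nonneg : ∀ t, 0 ≤ utr t)
    (β : ℝ) (hβ : 1 ≤ β)
    (u : ℝ → ℝ) (hu : ∀ t, u t = upr t + β * utr t)
    (x : ℝ → ℝ) (hx : ∀ t, x t = ∫ s in (0:ℝ)..t, u s)
    (τ₁ : ℝ → ℝ) (hτ₁ : ∀ t, τ₁ t = t + A + B * x t)
    (t₁ t₂ : ℝ) (ht₁ : t₁ = A) (ht₂ : t₂ = τ₁ t₁)
    (τinv : ℝ → ℝ)
    (hinv_right : ∀ t ∈ Set.Icc t₁ t₂, τ₁ (τinv t) = t ∧ τinv t ∈ Set.Icc (0:ℝ) t₁)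
    (τ₂ : ℝ → ℝ) (hτ₂ : ∀ t, τ₂ t = t + A + B * ∫ s in (τinv t)..t, u s) :
    τ₂ t₁ = τ₁ t₁ ∧ τ₂ t₁ = t₂ ∧
    (∀ t ∈ Set.Icc t₁ t₂,
      HasDerivWithinAt τ₂ (B * u t + 1 / (1 + B * u (τinv t))) (Set.Icc t₁ t₂) t) ∧
    (∀ t ∈ Set.Icc t₁ t₂, B * u t < B * u t + 1 / (1 + B * u (τinv t))) ∧
    (∀ t, 0 ≤ B * u t) ∧
    StrictMonoOn τ₂ (Set.Icc t₁ t₂) := by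
  have hu_cont : Continuous u := by rw [funext hu]; fun_prop
  have hu0 : ∀ t, 0 ≤ u t := fun t => by
    have := hupr_nonneg t; have := hutr_nonneg t; rw [hu]; positivity
  have hBu : ∀ t, 0 ≤ B * u t := fun t => mul_nonneg hB.le (hu0 t)
  have hpos : ∀ t, 0 < 1 + B * u t := fun t => by linarith [hBu t]
  have hx_deriv : ∀ t, HasDerivAt x (u t) t := fun t => by
    rw [funext hx]; exact (hu_cont.integral_hasStrictDerivAt 0 t).hasDerivAt
  have hτ₁_mono : StrictMono τ₁ := funext hτ₁ ▸ strictMono_of_hasDerivAt_pos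
    (hasDerivAt_add_const_add_mul hx_deriv) hpos
  obtain ⟨g, hg_right, hg⟩ := exists_rightInverse_hasDerivAt_add_const_add_mul hx_deriv hu0 hB.le
  have hτ₁g : ∀ t, τ₁ (g t) = t := fun t => (hτ₁ _).trans (hg_right t)
  have hτinv : EqOn τinv g (Icc t₁ t₂) := fun t ht =>
    hτ₁_mono.injective <| (hinv_right t ht).1.trans (hτ₁g t).symm
  have hτ₂_eq : EqOn τ₂ (fun t => 2 * A + B * x t + g t) (Icc t₁ t₂) := fun t ht => by
    have hτ₁_τinv := (hinv_right t ht).1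
    rw [hτ₁, hx] at hτ₁_τinv
    dsimp only
    rw [hτ₂, add_add_mul_intervalIntegral_eq (hu_cont.intervalIntegrable _ _)
      (hu_cont.intervalIntegrable _ _) hτ₁_τinv, hx, hτinv ht]
  have hF : ∀ t, HasDerivAt (fun t => 2 * A + B * x t + g t)
      (B * u t + (1 + B * u (g t))⁻¹) t := fun t =>
    (((hx_deriv t).const_mul B).const_add _).add (hg t)
  have hτ₁_zero : τ₁ 0 = t₁ := by simp [hτ₁, hx, ht₁]
  have ht₁_mem : t₁ ∈ Icc t₁ t₂ :=
    ⟨le_rfl, by rw [ht₂]; nth_rw 1 [← hτ₁_zero]; exact hτ₁_mono.monotone (ht₁ ▸ hA.le)⟩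
  have hτinv_t₁ : τinv t₁ = 0 :=
    hτ₁_mono.injective ((hinv_right t₁ ht₁_mem).1.trans hτ₁_zero.symm)
  have hτ₂_t₁ : τ₂ t₁ = τ₁ t₁ := by rw [hτ₂, hτinv_t₁, hτ₁, hx]
  refine ⟨hτ₂_t₁, hτ₂_t₁.trans ht₂.symm, fun t ht => ?_, fun t ht => ?_, hBu, ?_⟩
  · rw [hτinv ht, one_div]
    exact (hF t).hasDerivWithinAt.congr hτ₂_eq (hτ₂_eq ht)
  · exact lt_add_of_pos_right _ (one_div_pos.2 (hpos _))
  · exact ((strictMono_of_hasDerivAt_pos hF fun t => add_pos_of_nonneg_of_pos (hBu t)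
      (inv_pos.2 (hpos _))).strictMonoOn _).congr hτ₂_eq.symm

/-- With `τ₁ t = t + A + B·x t`, `t₁ = A`, `t₂ = τ₁ t₁`, and `τinv` the
inverse of `τ₁` mapping `[t₁,t₂]` back to `[0,t₁]`, the second-interval exit time
function `τ₂ t = t + A + B·∫_{τinv t}^{t} u` satisfies `τ₂ t₁ = τ₁ t₁ = t₂`, is
differentiable on `[t₁,t₂]` with `τ₂' t = B·u t + 1/(1 + B·u (τinv t))`, and in
particular `τ₂' t > B·u t ≥ 0`, so `τ₂` is strictly increasing on `[t₁,t₂]`. -/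
theorem second_interval_exit_time_strict_mono
    (A B : ℝ) (hA : 0 < A) (hB : 0 < B)
    (upr utr : ℝ → ℝ) (hupr_cont : Continuous upr) (hutr_cont : Continuous utr)
    (hupr_nonneg : ∀ t, 0 ≤ upr t) (hutr_nonneg : ∀ t, 0 ≤ utr t)
    (β : ℝ) (hβ : 1 ≤ β)
    (u : ℝ → ℝ) (hu : ∀ t, u t = upr t + β * utr t)
    (x : ℝ → ℝ) (hx : ∀ t, x t = ∫ s in (0:ℝ)..t, u s)
    (τ₁ : ℝ → ℝ) (hτ₁ : ∀ t, τ₁ t = t + A + B * x t)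
    (t₁ t₂ : ℝ) (ht₁ : t₁ = A) (ht₂ : t₂ = τ₁ t₁)
    (τinv : ℝ → ℝ)
    (hinv_left : ∀ t ∈ Set.Icc (0:ℝ) t₁, τinv (τ₁ t) = t)
    (hinv_right : ∀ t ∈ Set.Icc t₁ t₂, τ₁ (τinv t) = t ∧ τinv t ∈ Set.Icc (0:ℝ) t₁)
    (τ₂ : ℝ → ℝ) (hτ₂ : ∀ t, τ₂ t = t + A + B * ∫ s in (τinv t)..t, u s) :
    τ₂ t₁ = τ₁ t₁ ∧ τ₂ t₁ = t₂ ∧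
    (∀ t ∈ Set.Icc t₁ t₂,
      HasDerivWithinAt τ₂ (B * u t + 1 / (1 + B * u (τinv t))) (Set.Icc t₁ t₂) t) ∧
    (∀ t ∈ Set.Icc t₁ t₂, B * u t < B * u t + 1 / (1 + B * u (τinv t))) ∧
    (∀ t, 0 ≤ B * u t) ∧
    StrictMonoOn τ₂ (Set.Icc t₁ t₂) :=
  second_interval_exit_time_strict_mono_general A B hA hB upr utr hupr_cont hutr_cont hupr_nonneg
    hutr_nonneg β hβ u hu x hx τ₁ hτ₁ t₁ t₂ ht₁ ht₂ τinv hinv_right τ₂ hτ₂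
end

section
/- (Inductive step for exit-time monotonicity.) Let a < b be reals and let τ : [a,b] → ℝ be differentiable with τ(a) = b and, for all s ∈ [a,b], τ′(s) > 0 and τ′(s) > B·u(s). Set c = τ(b) and let τ⁻¹ : [b,c] → [a,b] be the inverse of τ. Define σ(t) = t + A + B·∫_{τ⁻¹(t)}^{t} u(s) ds for t ∈ [b,c]. Then σ is differentiable on [b,c] with σ′(t) = 1 + B·u(t) − B·u(τ⁻¹(t))/τ′(τ⁻¹(t)), and for all t ∈ [b,c] one has σ′(t) > B·u(t) and σ′(t) > 0; in particular σ is strictly increasing on [b,c]. -/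
/-!
Since `τ` has positive derivative it is strictly increasing, so its right inverse `τinv` is
continuous and, by the easy half of the inverse function theorem, has derivative
`1 / τ' (τinv t)`. Writing `∫_{τinv t}^{t} u = F t - F (τinv t)` with `F` a primitive of `u`,
the chain rule gives the formula for `σ'`. The hypothesis `B·u < τ'` says exactly that
`B·u (τinv t) / τ' (τinv t) < 1`, which yields `σ' t > B·u t ≥ 0`, and a positive derivative
makes `σ` strictly increasing.
-/

open Set Filter Topology

theorem Convex.strictMonoOn_of_hasDerivWithinAt_pos {D : Set ℝ} (hD : Convex ℝ D)
    {f f' : ℝ → ℝ} (hf : ∀ x ∈ D, HasDerivWithinAt f (f' x) D x) (hf' : ∀ x ∈ D, 0 < f' x) :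
    StrictMonoOn f D :=
  _root_.strictMonoOn_of_hasDerivWithinAt_pos hD (fun x hx => (hf x hx).continuousWithinAt)
    (fun x hx => (hf x (interior_subset hx)).mono interior_subset)
    (fun x hx => hf' x (interior_subset hx))

theorem StrictMonoOn.continuousWithinAt_of_rightInvOn {α β : Type*} [LinearOrder α]
    [TopologicalSpace α] [OrderTopology α] [LinearOrder β] [TopologicalSpace β] [OrderTopology β]
    {f : α → β} {g : β → α} {s : Set α} {t : Set β} (hf : StrictMonoOn f s)
    (hs : s.OrdConnected) (hg : MapsTo g t s) (hfg : RightInvOn g f t) {y : β} (hy : y ∈ t) :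
    ContinuousWithinAt g t y := by
  refine tendsto_order.2 ⟨fun x hx => ?_, fun x hx => ?_⟩
  · by_cases hxs : x ∈ s
    · have hfx : f x < y := hfg hy ▸ hf hxs (hg hy) hx
      filter_upwards [nhdsWithin_le_nhds (Ioi_mem_nhds hfx), self_mem_nhdsWithin] with z hz hzt
      by_contra! hle
      have hmono := hf.monotoneOn (hg hzt) hxs hle
      rw [hfg hzt] at hmono
      exact hmono.not_gt hz
    · filter_upwards [self_mem_nhdsWithin] with z hzt
      by_contra! hle
      exact hxs (hs.out (hg hzt) (hg hy) ⟨hle, hx.le⟩)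
  · by_cases hxs : x ∈ s
    · have hfx : y < f x := hfg hy ▸ hf (hg hy) hxs hx
      filter_upwards [nhdsWithin_le_nhds (Iio_mem_nhds hfx), self_mem_nhdsWithin] with z hz hzt
      by_contra! hle
      have hmono := hf.monotoneOn hxs (hg hzt) hle
      rw [hfg hzt] at hmono
      exact hmono.not_gt hz
    · filter_upwards [self_mem_nhdsWithin] with z hzt
      by_contra! hle
      exact hxs (hs.out (hg hy) (hg hzt) ⟨hx.le, hle⟩)

theorem HasDerivWithinAt.of_local_left_inverse {𝕜 : Type*} [NontriviallyNormedField 𝕜]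
    {f g : 𝕜 → 𝕜} {f' a : 𝕜} {s t : Set 𝕜} (hg : Tendsto g (𝓝[s] a) (𝓝[t] (g a)))
    (hf : HasDerivWithinAt f f' t (g a)) (hf' : f' ≠ 0) (ha : a ∈ s)
    (hfg : ∀ᶠ x in 𝓝[s] a, f (g x) = x) : HasDerivWithinAt g f'⁻¹ s a :=
  HasFDerivWithinAt.of_local_left_inverse
    (f' := ContinuousLinearEquiv.unitsEquivAut 𝕜 (Units.mk0 f' hf')) hg hf ha hfg

theorem StrictMonoOn.hasDerivWithinAt_rightInvOn {f g : ℝ → ℝ} {f' : ℝ} {s t : Set ℝ}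
    (hf : StrictMonoOn f s) (hs : s.OrdConnected) (hg : MapsTo g t s) (hfg : RightInvOn g f t)
    {y : ℝ} (hy : y ∈ t) (hf_deriv : HasDerivWithinAt f f' s (g y)) (hf' : f' ≠ 0) :
    HasDerivWithinAt g f'⁻¹ t y :=
  hf_deriv.of_local_left_inverse
    ((hf.continuousWithinAt_of_rightInvOn hs hg hfg hy).tendsto_nhdsWithin hg) hf' hy
    (eventually_nhdsWithin_of_forall hfg)

theorem Continuous.hasDerivWithinAt_integral_from {u g : ℝ → ℝ} {g' t : ℝ} {s : Set ℝ}
    (hu : Continuous u) (hg : HasDerivWithinAt g g' s t) :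
    HasDerivWithinAt (fun x => ∫ y in g x..x, u y) (u t - u (g t) * g') s t := by
  have hF : ∀ x, HasDerivAt (fun x => ∫ y in (0 : ℝ)..x, u y) (u x) x := fun x =>
    (hu.integral_hasStrictDerivAt 0 x).hasDerivAt
  have hsplit : (fun x => ∫ y in g x..x, u y) =
      fun x => (∫ y in (0 : ℝ)..x, u y) - ∫ y in (0 : ℝ)..g x, u y := by
    funext x
    exact (intervalIntegral.integral_interval_sub_left (hu.intervalIntegrable 0 x)
      (hu.intervalIntegrable 0 (g x))).symm
  rw [hsplit]
  exact (hF t).hasDerivWithinAt.sub ((hF (g t)).comp_hasDerivWithinAt t hg)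

theorem exit_time_inductive_step_general
    (A B : ℝ) (hB : 0 < B)
    (upr utr : ℝ → ℝ) (hupr_cont : Continuous upr) (hutr_cont : Continuous utr)
    (hupr_nonneg : ∀ t, 0 ≤ upr t) (hutr_nonneg : ∀ t, 0 ≤ utr t)
    (β : ℝ) (hβ : 1 ≤ β)
    (u : ℝ → ℝ) (hu : ∀ t, u t = upr t + β * utr t)
    (a b : ℝ)
    (τ τ' : ℝ → ℝ)
    (hτ_deriv : ∀ s ∈ Set.Icc a b, HasDerivWithinAt τ (τ' s) (Set.Icc a b) s)
    (hτ'_pos : ∀ s ∈ Set.Icc a b, 0 < τ' s)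
    (hτ'_gt : ∀ s ∈ Set.Icc a b, B * u s < τ' s)
    (c : ℝ)
    (τinv : ℝ → ℝ)
    (hinv_right : ∀ t ∈ Set.Icc b c, τ (τinv t) = t ∧ τinv t ∈ Set.Icc a b)
    (σ : ℝ → ℝ) (hσ : ∀ t, σ t = t + A + B * ∫ s in (τinv t)..t, u s) :
    (∀ t ∈ Set.Icc b c,
      HasDerivWithinAt σ (1 + B * u t - B * u (τinv t) / τ' (τinv t)) (Set.Icc b c) t) ∧
    (∀ t ∈ Set.Icc b c, B * u t < 1 + B * u t - B * u (τinv t) / τ' (τinv t)) ∧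
    (∀ t ∈ Set.Icc b c, 0 < 1 + B * u t - B * u (τinv t) / τ' (τinv t)) ∧
    StrictMonoOn σ (Set.Icc b c) := by
  have hu_eq : u = fun t => upr t + β * utr t := funext hu
  have hu_cont : Continuous u := hu_eq ▸ hupr_cont.add (continuous_const.mul hutr_cont)
  have hu_nonneg : ∀ t, 0 ≤ u t := fun t =>
    hu t ▸ add_nonneg (hupr_nonneg t) (mul_nonneg (by linarith) (hutr_nonneg t))
  have hτ_mono : StrictMonoOn τ (Icc a b) :=
    (convex_Icc a b).strictMonoOn_of_hasDerivWithinAt_pos hτ_deriv hτ'_pos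
  have hτinv_deriv : ∀ t ∈ Icc b c, HasDerivWithinAt τinv (τ' (τinv t))⁻¹ (Icc b c) t :=
    fun t ht => hτ_mono.hasDerivWithinAt_rightInvOn ordConnected_Icc
      (fun t ht => (hinv_right t ht).2) (fun t ht => (hinv_right t ht).1) ht
      (hτ_deriv _ (hinv_right t ht).2) (hτ'_pos _ (hinv_right t ht).2).ne'
  have hσ_deriv : ∀ t ∈ Icc b c,
      HasDerivWithinAt σ (1 + B * u t - B * u (τinv t) / τ' (τinv t)) (Icc b c) t := by
    intro t ht
    rw [funext hσ]
    refine (((hasDerivWithinAt_id t _).add_const A).add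
      ((hu_cont.hasDerivWithinAt_integral_from (hτinv_deriv t ht)).const_mul B)).congr_deriv ?_
    rw [div_eq_mul_inv]
    ring
  have hσ'_gt : ∀ t ∈ Icc b c, B * u t < 1 + B * u t - B * u (τinv t) / τ' (τinv t) :=
    fun t ht => by
      have hs := (hinv_right t ht).2
      linarith [(div_lt_one (hτ'_pos _ hs)).2 (hτ'_gt _ hs)]
  have hσ'_pos : ∀ t ∈ Icc b c, 0 < 1 + B * u t - B * u (τinv t) / τ' (τinv t) :=
    fun t ht => (mul_nonneg hB.le (hu_nonneg t)).trans_lt (hσ'_gt t ht)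
  exact ⟨hσ_deriv, hσ'_gt, hσ'_pos,
    (convex_Icc b c).strictMonoOn_of_hasDerivWithinAt_pos hσ_deriv hσ'_pos⟩

/-- inductive step for exit-time monotonicity: If `τ : [a,b] → ℝ` is
differentiable with `τ a = b`, `τ' s > 0` and `τ' s > B·u s` on `[a,b]`, `c = τ b`, and
`τinv : [b,c] → [a,b]` is the inverse of `τ`, then
`σ t = t + A + B·∫_{τinv t}^{t} u` is differentiable on `[b,c]` with
`σ' t = 1 + B·u t − B·u (τinv t)/τ' (τinv t)`, and `σ' t > B·u t`, `σ' t > 0`; in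
particular `σ` is strictly increasing on `[b,c]`. -/
theorem exit_time_inductive_step
    (A B : ℝ) (hA : 0 < A) (hB : 0 < B)
    (upr utr : ℝ → ℝ) (hupr_cont : Continuous upr) (hutr_cont : Continuous utr)
    (hupr_nonneg : ∀ t, 0 ≤ upr t) (hutr_nonneg : ∀ t, 0 ≤ utr t)
    (β : ℝ) (hβ : 1 ≤ β)
    (u : ℝ → ℝ) (hu : ∀ t, u t = upr t + β * utr t)
    (a b : ℝ) (hab : a < b)
    (τ τ' : ℝ → ℝ)
    (hτ_deriv : ∀ s ∈ Set.Icc a b, HasDerivWithinAt τ (τ' s) (Set.Icc a b) s)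
    (hτa : τ a = b)
    (hτ'_pos : ∀ s ∈ Set.Icc a b, 0 < τ' s)
    (hτ'_gt : ∀ s ∈ Set.Icc a b, B * u s < τ' s)
    (c : ℝ) (hc : c = τ b)
    (τinv : ℝ → ℝ)
    (hinv_left : ∀ s ∈ Set.Icc a b, τinv (τ s) = s)
    (hinv_right : ∀ t ∈ Set.Icc b c, τ (τinv t) = t ∧ τinv t ∈ Set.Icc a b)
    (σ : ℝ → ℝ) (hσ : ∀ t, σ t = t + A + B * ∫ s in (τinv t)..t, u s) :
    (∀ t ∈ Set.Icc b c,
      HasDerivWithinAt σ (1 + B * u t - B * u (τinv t) / τ' (τinv t)) (Set.Icc b c) t) ∧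
    (∀ t ∈ Set.Icc b c, B * u t < 1 + B * u t - B * u (τinv t) / τ' (τinv t)) ∧
    (∀ t ∈ Set.Icc b c, 0 < 1 + B * u t - B * u (τinv t) / τ' (τinv t)) ∧
    StrictMonoOn σ (Set.Icc b c) :=
  exit_time_inductive_step_general A B hB upr utr hupr_cont hutr_cont hupr_nonneg hutr_nonneg β hβ u
    hu a b τ τ' hτ_deriv hτ'_pos hτ'_gt c τinv hinv_right σ hσ
end

section
/- (Uniqueness of the dynamic network loading trajectory for a single arc.) Let h : ℝ → ℝ be continuous, let I ⊆ ℝ be an interval and t₀ ∈ I. Suppose (x₁,g₁,r₁) and (x₂,g₂,r₂) are two continuously differentiable functions I → ℝ³ that both satisfy the system x′(t) = h(t) − g(t), g′(t) = r(t), r′(t) = R(h(t), x(t), g(t), r(t)) for all t ∈ I, that both satisfy A + B·xᵢ(t) > 0 and 1 + B·(h(t) − gᵢ(t)) > 0 for all t ∈ I (i = 1,2), and that agree at t₀: (x₁,g₁,r₁)(t₀) = (x₂,g₂,r₂)(t₀). Then (x₁,g₁,r₁)(t) = (x₂,g₂,r₂)(t) for all t ∈ I. -/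
/-!
The right-hand side of the system, as a function of `(h, x, g, r)`, is rational with denominators
`(A + B x)²` and `1 + B (h − g)`, which do not vanish along the trajectories; so it is `C¹`,
hence locally Lipschitz, near every point of a trajectory. Where the two trajectories agree,
Gronwall's inequality therefore makes them agree on a neighbourhood in `I`, so the set of times of
agreement is open in `I`; it is also closed by continuity and contains `t₀`, and `I` is connected.
-/

open Set Filter Topology Metric
open scoped NNReal

theorem IsPreconnected.eqOn_of_eventuallyEq_nhdsWithin {X Y : Type*} [TopologicalSpace X]
    [TopologicalSpace Y] [T2Space Y] {s : Set X} {f g : X → Y} (hs : IsPreconnected s)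
    (hf : ContinuousOn f s) (hg : ContinuousOn g s)
    (hloc : ∀ x ∈ s, f x = g x → f =ᶠ[𝓝[s] x] g) {x₀ : X} (hx₀ : x₀ ∈ s)
    (h₀ : f x₀ = g x₀) : EqOn f g s := by
  have := isPreconnected_iff_preconnectedSpace.mp hs
  have hclopen : IsClopen {x : s | f x = g x} := by
    refine ⟨isClosed_eq hf.domRestrict hg.domRestrict, isOpen_iff_mem_nhds.2 fun x hx => ?_⟩
    exact (eventually_nhds_subtype_iff s x (fun y => f y = g y)).2 (hloc x x.2 hx)
  intro x hx
  exact (hclopen.eq_univ ⟨⟨x₀, hx₀⟩, h₀⟩).symm.subset (mem_univ ⟨x, hx⟩)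

section ODE

variable {E : Type*} [NormedAddCommGroup E] [NormedSpace ℝ E]
  {v : ℝ → E → E} {s : ℝ → Set E} {K : ℝ≥0} {f g : ℝ → E}

theorem ODE_solution_unique_of_hasDerivWithinAt_Icc {a b t₀ : ℝ}
    (hv : ∀ t ∈ Icc a b, LipschitzOnWith K (v t) (s t)) (ht₀ : t₀ ∈ Icc a b)
    (hf : ∀ t ∈ Icc a b, HasDerivWithinAt f (v t (f t)) (Icc a b) t)
    (hfs : ∀ t ∈ Icc a b, f t ∈ s t)
    (hg : ∀ t ∈ Icc a b, HasDerivWithinAt g (v t (g t)) (Icc a b) t)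
    (hgs : ∀ t ∈ Icc a b, g t ∈ s t)
    (heq : f t₀ = g t₀) : EqOn f g (Icc a b) := by
  have hfc : ContinuousOn f (Icc a b) := fun t ht => (hf t ht).continuousWithinAt
  have hgc : ContinuousOn g (Icc a b) := fun t ht => (hg t ht).continuousWithinAt
  rw [← Icc_union_Icc_eq_Icc ht₀.1 ht₀.2]
  refine EqOn.union ?_ ?_
  · have hsub : Icc a t₀ ⊆ Icc a b := Icc_subset_Icc_right ht₀.2
    have hsub' : Ioc a t₀ ⊆ Icc a b := Ioc_subset_Icc_self.trans hsub
    have hleft {φ : ℝ → E} (hφ : ∀ t ∈ Icc a b, HasDerivWithinAt φ (v t (φ t)) (Icc a b) t)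
        (t : ℝ) (ht : t ∈ Ioc a t₀) : HasDerivWithinAt φ (v t (φ t)) (Iic t) t :=
      (hφ t (hsub' ht)).mono_of_mem_nhdsWithin
        (Icc_mem_nhdsLE_of_mem ⟨ht.1, (hsub' ht).2⟩)
    exact ODE_solution_unique_of_mem_Icc_left (fun t ht => hv t (hsub' ht)) (hfc.mono hsub)
      (hleft hf) (fun t ht => hfs t (hsub' ht)) (hgc.mono hsub) (hleft hg)
      (fun t ht => hgs t (hsub' ht)) heq
  · have hsub : Icc t₀ b ⊆ Icc a b := Icc_subset_Icc_left ht₀.1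
    have hsub' : Ico t₀ b ⊆ Icc a b := Ico_subset_Icc_self.trans hsub
    have hright {φ : ℝ → E} (hφ : ∀ t ∈ Icc a b, HasDerivWithinAt φ (v t (φ t)) (Icc a b) t)
        (t : ℝ) (ht : t ∈ Ico t₀ b) : HasDerivWithinAt φ (v t (φ t)) (Ici t) t :=
      (hφ t (hsub' ht)).mono_of_mem_nhdsWithin
        (Icc_mem_nhdsGE_of_mem ⟨(hsub' ht).1, ht.2⟩)
    exact ODE_solution_unique_of_mem_Icc_right (fun t ht => hv t (hsub' ht)) (hfc.mono hsub)
      (hright hf) (fun t ht => hfs t (hsub' ht)) (hgc.mono hsub) (hright hg)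
      (fun t ht => hgs t (hsub' ht)) heq

theorem ODE_solution_eventuallyEq_nhdsWithin {I : Set ℝ} (hI : I.OrdConnected) {t₀ : ℝ}
    (ht₀ : t₀ ∈ I) (hv : ∀ᶠ t in 𝓝[I] t₀, LipschitzOnWith K (v t) (s t))
    (hf : ∀ t ∈ I, HasDerivWithinAt f (v t (f t)) I t) (hfs : ∀ᶠ t in 𝓝[I] t₀, f t ∈ s t)
    (hg : ∀ t ∈ I, HasDerivWithinAt g (v t (g t)) I t) (hgs : ∀ᶠ t in 𝓝[I] t₀, g t ∈ s t)
    (heq : f t₀ = g t₀) : f =ᶠ[𝓝[I] t₀] g := by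
  obtain ⟨ε, hε, hball⟩ := Metric.mem_nhdsWithin_iff.mp (hv.and (hfs.and hgs))
  have hJ : (ball t₀ ε ∩ I).OrdConnected := by
    rw [Real.ball_eq_Ioo]; exact ordConnected_Ioo.inter hI
  filter_upwards [inter_mem_nhdsWithin I (ball_mem_nhds t₀ hε)] with u hu
  have hsub : uIcc t₀ u ⊆ ball t₀ ε ∩ I := hJ.uIcc_subset ⟨mem_ball_self hε, ht₀⟩ ⟨hu.2, hu.1⟩
  have hsubI : uIcc t₀ u ⊆ I := hsub.trans inter_subset_right
  exact ODE_solution_unique_of_hasDerivWithinAt_Icc (fun t ht => (hball (hsub ht)).1) left_mem_uIcc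
    (fun t ht => (hf t (hsubI ht)).mono hsubI) (fun t ht => (hball (hsub ht)).2.1)
    (fun t ht => (hg t (hsubI ht)).mono hsubI) (fun t ht => (hball (hsub ht)).2.2)
    heq right_mem_uIcc

theorem ODE_solution_eqOn_of_contDiffAt {F : Type*} [NormedAddCommGroup F] [NormedSpace ℝ F]
    {V : F × E → E} {u : ℝ → F} {I : Set ℝ} (hI : I.OrdConnected) (hu : ContinuousOn u I)
    (hV : ∀ t ∈ I, ContDiffAt ℝ 1 V (u t, f t))
    (hf : ∀ t ∈ I, HasDerivWithinAt f (V (u t, f t)) I t)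
    (hg : ∀ t ∈ I, HasDerivWithinAt g (V (u t, g t)) I t)
    {t₀ : ℝ} (ht₀ : t₀ ∈ I) (heq : f t₀ = g t₀) : EqOn f g I := by
  have hfc : ContinuousOn f I := fun t ht => (hf t ht).continuousWithinAt
  have hgc : ContinuousOn g I := fun t ht => (hg t ht).continuousWithinAt
  refine hI.isPreconnected.eqOn_of_eventuallyEq_nhdsWithin hfc hgc (fun t₁ ht₁ h₁ => ?_) ht₀ heq
  obtain ⟨K, U, hU, hlip⟩ := (hV t₁ ht₁).exists_lipschitzOnWith
  have hslice (t : ℝ) : LipschitzOnWith K (fun p => V (u t, p)) {p | (u t, p) ∈ U} := by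
    rw [← mul_one K]
    exact hlip.comp (LipschitzWith.prodMk_left (u t)).lipschitzOnWith fun _ hp => hp
  have hnear {φ : ℝ → E} (hφ : ContinuousOn φ I) (hφ₁ : φ t₁ = f t₁) :
      ∀ᶠ t in 𝓝[I] t₁, (u t, φ t) ∈ U :=
    ((hu t₁ ht₁).prodMk (hφ t₁ ht₁)).tendsto (by rwa [hφ₁])
  exact ODE_solution_eventuallyEq_nhdsWithin hI ht₁ (Eventually.of_forall hslice)
    hf (hnear hfc rfl) hg (hnear hgc h₁.symm) h₁

end ODE

-- `(h, x, g, r) ↦ (x', g', r')` for the system of the theorem.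
noncomputable def dnlField (A B : ℝ) (q : ℝ × ℝ × ℝ × ℝ) : ℝ × ℝ × ℝ :=
  (q.1 - q.2.2.1, q.2.2.2,
    2 * q.1 / ((A + B * q.2.1) ^ 2 * (1 + B * (q.1 - q.2.2.1)))
      - 2 * (q.2.2.1 + q.2.2.2 * (A + B * q.2.1)) / (A + B * q.2.1) ^ 2)

theorem contDiffAt_dnlField {A B : ℝ} {q : ℝ × ℝ × ℝ × ℝ}
    (h₁ : A + B * q.2.1 ≠ 0) (h₂ : 1 + B * (q.1 - q.2.2.1) ≠ 0) :
    ContDiffAt ℝ 1 (dnlField A B) q := by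
  unfold dnlField
  fun_prop (disch := simp [*])

theorem dnl_trajectory_unique_general
    (A B : ℝ)
    (R : ℝ → ℝ → ℝ → ℝ → ℝ)
    (hR : ∀ h x g r, R h x g r =
      2 * h / ((A + B * x) ^ 2 * (1 + B * (h - g)))
        - 2 * (g + r * (A + B * x)) / (A + B * x) ^ 2)
    (h : ℝ → ℝ) (hh : Continuous h)
    (I : Set ℝ) (hI : I.OrdConnected) (t₀ : ℝ) (ht₀ : t₀ ∈ I)
    (x₁ g₁ r₁ x₂ g₂ r₂ : ℝ → ℝ)
    (hx₁ : ∀ t ∈ I, HasDerivWithinAt x₁ (h t - g₁ t) I t)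
    (hg₁ : ∀ t ∈ I, HasDerivWithinAt g₁ (r₁ t) I t)
    (hr₁ : ∀ t ∈ I, HasDerivWithinAt r₁ (R (h t) (x₁ t) (g₁ t) (r₁ t)) I t)
    (hx₂ : ∀ t ∈ I, HasDerivWithinAt x₂ (h t - g₂ t) I t)
    (hg₂ : ∀ t ∈ I, HasDerivWithinAt g₂ (r₂ t) I t)
    (hr₂ : ∀ t ∈ I, HasDerivWithinAt r₂ (R (h t) (x₂ t) (g₂ t) (r₂ t)) I t)
    (hpos₁ : ∀ t ∈ I, 0 < A + B * x₁ t ∧ 0 < 1 + B * (h t - g₁ t))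
    (hinit : x₁ t₀ = x₂ t₀ ∧ g₁ t₀ = g₂ t₀ ∧ r₁ t₀ = r₂ t₀) :
    ∀ t ∈ I, x₁ t = x₂ t ∧ g₁ t = g₂ t ∧ r₁ t = r₂ t := by
  have hsol : ∀ x g r : ℝ → ℝ, (∀ t ∈ I, HasDerivWithinAt x (h t - g t) I t) →
      (∀ t ∈ I, HasDerivWithinAt g (r t) I t) →
      (∀ t ∈ I, HasDerivWithinAt r (R (h t) (x t) (g t) (r t)) I t) →
      ∀ t ∈ I, HasDerivWithinAt (fun s => (x s, g s, r s))
        (dnlField A B (h t, x t, g t, r t)) I t := by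
    intro x g r hx hg hr t ht
    convert (hx t ht).prodMk ((hg t ht).prodMk (hr t ht)) using 1
    simp [dnlField, hR]
  have heqOn := ODE_solution_eqOn_of_contDiffAt hI hh.continuousOn
    (fun t ht => contDiffAt_dnlField (hpos₁ t ht).1.ne' (hpos₁ t ht).2.ne')
    (hsol x₁ g₁ r₁ hx₁ hg₁ hr₁) (hsol x₂ g₂ r₂ hx₂ hg₂ hr₂) ht₀ (by simp [hinit])
  intro t ht
  simpa using heqOn ht

/-- uniqueness of the dynamic network loading trajectory for a single arc:
two C¹ solutions of the system `x' = h − g`, `g' = r`, `r' = R(h,x,g,r)` on an interval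
`I` that keep `A + Bx > 0` and `1 + B(h − g) > 0` and agree at some `t₀ ∈ I` coincide
on all of `I`. -/
theorem dnl_trajectory_unique
    (A B : ℝ) (hA : 0 < A) (hB : 0 < B)
    (R : ℝ → ℝ → ℝ → ℝ → ℝ)
    (hR : ∀ h x g r, R h x g r =
      2 * h / ((A + B * x) ^ 2 * (1 + B * (h - g)))
        - 2 * (g + r * (A + B * x)) / (A + B * x) ^ 2)
    (h : ℝ → ℝ) (hh : Continuous h)
    (I : Set ℝ) (hI : I.OrdConnected) (t₀ : ℝ) (ht₀ : t₀ ∈ I)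
    (x₁ g₁ r₁ x₂ g₂ r₂ : ℝ → ℝ)
    (hx₁ : ∀ t ∈ I, HasDerivWithinAt x₁ (h t - g₁ t) I t)
    (hg₁ : ∀ t ∈ I, HasDerivWithinAt g₁ (r₁ t) I t)
    (hr₁ : ∀ t ∈ I, HasDerivWithinAt r₁ (R (h t) (x₁ t) (g₁ t) (r₁ t)) I t)
    (hx₂ : ∀ t ∈ I, HasDerivWithinAt x₂ (h t - g₂ t) I t)
    (hg₂ : ∀ t ∈ I, HasDerivWithinAt g₂ (r₂ t) I t)
    (hr₂ : ∀ t ∈ I, HasDerivWithinAt r₂ (R (h t) (x₂ t) (g₂ t) (r₂ t)) I t)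
    (hpos₁ : ∀ t ∈ I, 0 < A + B * x₁ t ∧ 0 < 1 + B * (h t - g₁ t))
    (hpos₂ : ∀ t ∈ I, 0 < A + B * x₂ t ∧ 0 < 1 + B * (h t - g₂ t))
    (hinit : x₁ t₀ = x₂ t₀ ∧ g₁ t₀ = g₂ t₀ ∧ r₁ t₀ = r₂ t₀) :
    ∀ t ∈ I, x₁ t = x₂ t ∧ g₁ t = g₂ t ∧ r₁ t = r₂ t :=
  dnl_trajectory_unique_general A B R hR h hh I hI t₀ ht₀ x₁ g₁ r₁ x₂ g₂ r₂ hx₁ hg₁ hr₁ hx₂ hg₂ hr₂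
    hpos₁ hinit
end
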